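/- The functions e_n(x) = T^{-1/2}·exp((2πin/T − λ)x), n ∈ ℤ, on ℝ₊ form a Riesz basis of the closed subspace ran(𝒜) of L²(ℝ₊,ℂ); that is, e_n = 𝒜 b_n for the orthonormal basis b_n(x) = T^{-1/2} e^{2πinx/T} of L²([0,T),ℂ), and 𝒜 is a bounded invertible operator onto ran(𝒜). -/

import Mathlib

/-! On the cell `[kT, (k+1)T)` the function `|𝒜f|²` is the translate of `e^{-2λy} |f y|²`
scaled by `r^k`, where `r = e^{-2λT}`. Summing the geometric series gives
`‖𝒜f‖² = (1 - r)⁻¹ ∫₀ᵀ e^{-2λy} |f y|² dy`, and `r ≤ e^{-2λy} ≤ 1` on `[0, T)` yields both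
bounds. The identity `e_n = 𝒜 b_n` is the `T`-periodicity of `e^{2πinx/T}`, and the
orthonormality of `(b_n)` is the vanishing of `∫₀ᵀ e^{2πikx/T} dx` for `k ≠ 0`. -/

open MeasureTheory Complex

/-- `cut T x = x mod T`. -/
noncomputable def cut (T x : ℝ) : ℝ := x - T * ⌊x / T⌋

/-- The operator `𝒜`, `(𝒜 f)(x) = e^{-λ x} f(cut x)`. -/
noncomputable def Aop (T lm : ℝ) (f : ℝ → ℂ) : ℝ → ℂ :=
  fun x => Real.exp (-lm * x) • f (cut T x)

/-- The Fourier orthonormal basis `b_n(x) = T^{-1/2} e^{2πinx/T}` of `L²([0,T),ℂ)`. -/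
noncomputable def bfun (T : ℝ) (n : ℤ) (x : ℝ) : ℂ :=
  (1 / Real.sqrt T : ℝ) • Complex.exp (2 * Real.pi * Complex.I * n * x / T)

/-- `e_n(x) = T^{-1/2} exp((2πin/T - λ)x)`. -/
noncomputable def efun (T lm : ℝ) (n : ℤ) (x : ℝ) : ℂ :=
  (1 / Real.sqrt T : ℝ) • Complex.exp ((2 * Real.pi * Complex.I * n / T - lm) * x)

open Set
open scoped Real ComplexConjugate

section Cells

variable {E : Type*} [NormedAddCommGroup E]

theorem setIntegral_Ico_add_eq [NormedSpace ℝ E] (g : ℝ → E) (c T : ℝ) :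
    ∫ x in Ico c (c + T), g x = ∫ y in Ico 0 T, g (y + c) := by
  have h := (measurePreserving_add_right volume c).setIntegral_preimage_emb
    (measurableEmbedding_addRight c) g (Ico c (c + T))
  rw [preimage_add_const_Ico, sub_self, add_sub_cancel_left] at h
  exact h.symm

theorem integrableOn_Ico_add_iff {g : ℝ → E} {c T : ℝ} :
    IntegrableOn (fun y => g (y + c)) (Ico 0 T) ↔ IntegrableOn g (Ico c (c + T)) := by
  have h := (measurePreserving_add_right volume c).integrableOn_comp_preimage
    (measurableEmbedding_addRight c) (f := g) (s := Ico c (c + T))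
  rwa [preimage_add_const_Ico, sub_self, add_sub_cancel_left] at h

theorem iUnion_Ico_nat_mul {T : ℝ} (hT : 0 < T) :
    ⋃ k : ℕ, Ico (k * T) (k * T + T) = Ici 0 := by
  ext x
  simp only [mem_iUnion, mem_Ico, mem_Ici]
  constructor
  · rintro ⟨k, hk, -⟩
    exact (by positivity : (0 : ℝ) ≤ k * T).trans hk
  · intro hx
    refine ⟨⌊x / T⌋₊, ?_, ?_⟩
    · exact (le_div_iff₀ hT).1 (Nat.floor_le (div_nonneg hx hT.le))
    · rw [← add_one_mul, ← div_lt_iff₀ hT]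
      exact Nat.lt_floor_add_one _

theorem pairwise_disjoint_Ico_nat_mul (T : ℝ) :
    Pairwise (Function.onFun Disjoint fun k : ℕ => Ico (k * T) (k * T + T)) := by
  intro i j hij
  simpa [add_mul] using pairwise_disjoint_Ico_zsmul T (Int.natCast_inj.not.2 hij)

section GeometricCells

variable [NormedSpace ℝ E] {g h : ℝ → E} {r T : ℝ}

theorem integrableOn_Ici_of_geometric_cells (hT : 0 < T) (hr0 : 0 ≤ r) (hr1 : r < 1)
    (hh : IntegrableOn h (Ico 0 T)) (hgh : ∀ k : ℕ, ∀ y ∈ Ico 0 T, g (y + k * T) = r ^ k • h y) :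
    IntegrableOn g (Ici 0) := by
  have hcell_int (k : ℕ) : IntegrableOn g (Ico (k * T) (k * T + T)) :=
    integrableOn_Ico_add_iff.1 <|
      IntegrableOn.congr_fun (hh.smul (r ^ k)) (fun y hy => (hgh k y hy).symm) measurableSet_Ico
  have hcell_norm (k : ℕ) :
      ∫ x in Ico (k * T) (k * T + T), ‖g x‖ = r ^ k * ∫ y in Ico 0 T, ‖h y‖ := by
    rw [setIntegral_Ico_add_eq, ← integral_const_mul]
    refine setIntegral_congr_fun measurableSet_Ico fun y hy => ?_
    rw [hgh k y hy, norm_smul, Real.norm_of_nonneg (pow_nonneg hr0 k)]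
  rw [← iUnion_Ico_nat_mul hT]
  refine integrableOn_iUnion_of_summable_integral_norm hcell_int ?_
  simp_rw [hcell_norm]
  exact (summable_geometric_of_lt_one hr0 hr1).mul_right _

theorem integral_Ici_eq_of_geometric_cells [CompleteSpace E] (hT : 0 < T) (hr0 : 0 ≤ r)
    (hr1 : r < 1) (hh : IntegrableOn h (Ico 0 T))
    (hgh : ∀ k : ℕ, ∀ y ∈ Ico 0 T, g (y + k * T) = r ^ k • h y) :
    ∫ x in Ici 0, g x = (1 - r)⁻¹ • ∫ y in Ico 0 T, h y := by
  have hcell (k : ℕ) : ∫ x in Ico (k * T) (k * T + T), g x = r ^ k • ∫ y in Ico 0 T, h y := by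
    rw [setIntegral_Ico_add_eq, setIntegral_congr_fun measurableSet_Ico (hgh k), integral_smul]
  have hint := integrableOn_Ici_of_geometric_cells hT hr0 hr1 hh hgh
  have hsum := hasSum_integral_iUnion (fun _ => measurableSet_Ico)
    (pairwise_disjoint_Ico_nat_mul T) ((iUnion_Ico_nat_mul hT).symm ▸ hint)
  simp_rw [iUnion_Ico_nat_mul hT, hcell] at hsum
  exact hsum.unique ((hasSum_geometric_of_lt_one hr0 hr1).smul_const _)

end GeometricCells

end Cells

theorem cut_eq_toIcoMod {T : ℝ} (hT : 0 < T) (x : ℝ) : cut T x = toIcoMod hT 0 x := by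
  rw [toIcoMod, toIcoDiv_eq_floor, cut, sub_zero, zsmul_eq_mul, mul_comm]

theorem cut_add_nat_mul_of_mem_Ico {T y : ℝ} (hT : 0 < T) (hy : y ∈ Ico 0 T) (k : ℕ) :
    cut T (y + k * T) = y := by
  rw [cut_eq_toIcoMod hT, toIcoMod_add_natCast_mul, toIcoMod_eq_self, zero_add]
  exact hy

theorem norm_Aop_sq_add_nat_mul {T y : ℝ} (lm : ℝ) (f : ℝ → ℂ) (hT : 0 < T) (hy : y ∈ Ico 0 T)
    (k : ℕ) :
    ‖Aop T lm f (y + k * T)‖ ^ 2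
      = Real.exp (-2 * T * lm) ^ k * (Real.exp (-2 * lm * y) * ‖f y‖ ^ 2) := by
  rw [Aop, cut_add_nat_mul_of_mem_Ico hT hy, norm_smul, Real.norm_of_nonneg (Real.exp_pos _).le,
    mul_pow, ← mul_assoc, ← Real.exp_nat_mul, ← Real.exp_nat_mul, ← Real.exp_add]
  congr 2
  push_cast
  ring

theorem integrableOn_exp_mul {φ : ℝ → ℝ} {a b c : ℝ} (hφ : IntegrableOn φ (Ico b c)) :
    IntegrableOn (fun y => Real.exp (a * y) * φ y) (Ico b c) :=
  (((integrableOn_Icc_iff_integrableOn_Ico).2 hφ).continuousOn_mul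
    (by fun_prop : Continuous fun y => Real.exp (a * y)).continuousOn isCompact_Icc).mono_set
    Ico_subset_Icc_self

theorem integral_norm_Aop_sq {T lm : ℝ} {f : ℝ → ℂ} (hT : 0 < T) (hl : 0 < lm)
    (hf : IntegrableOn (fun x => ‖f x‖ ^ 2) (Ico 0 T)) :
    ∫ x in Ici 0, ‖Aop T lm f x‖ ^ 2
      = (1 - Real.exp (-2 * T * lm))⁻¹ * ∫ y in Ico 0 T, Real.exp (-2 * lm * y) * ‖f y‖ ^ 2 :=
  integral_Ici_eq_of_geometric_cells hT (Real.exp_pos _).le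
    (Real.exp_lt_one_iff.2 (by nlinarith)) (integrableOn_exp_mul hf)
    fun k y hy => norm_Aop_sq_add_nat_mul lm f hT hy k

section WeightBounds

variable {φ : ℝ → ℝ} {a T : ℝ}

theorem setIntegral_exp_mul_le (ha : a ≤ 0) (hφ0 : ∀ y, 0 ≤ φ y)
    (hφ : IntegrableOn φ (Ico 0 T)) :
    ∫ y in Ico 0 T, Real.exp (a * y) * φ y ≤ ∫ y in Ico 0 T, φ y :=
  setIntegral_mono_on (integrableOn_exp_mul hφ) hφ measurableSet_Ico fun y hy =>
    mul_le_of_le_one_left (hφ0 y) (Real.exp_le_one_iff.2 (mul_nonpos_of_nonpos_of_nonneg ha hy.1))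

theorem exp_mul_setIntegral_le (ha : a ≤ 0) (hφ0 : ∀ y, 0 ≤ φ y)
    (hφ : IntegrableOn φ (Ico 0 T)) :
    Real.exp (a * T) * ∫ y in Ico 0 T, φ y ≤ ∫ y in Ico 0 T, Real.exp (a * y) * φ y := by
  rw [← integral_const_mul]
  exact setIntegral_mono_on (hφ.const_mul _) (integrableOn_exp_mul hφ) measurableSet_Ico
    fun y hy => mul_le_mul_of_nonneg_right
      (Real.exp_le_exp.2 (mul_le_mul_of_nonpos_left hy.2.le ha)) (hφ0 y)

end WeightBounds

theorem integral_exp_two_pi_I_int_mul {T : ℝ} (hT : T ≠ 0) (k : ℤ) :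
    ∫ x in (0)..T, cexp (2 * π * I * k / T * x) = if k = 0 then (T : ℂ) else 0 := by
  split_ifs with hk
  · simp [hk]
  have hc : 2 * π * I * k / T ≠ 0 := by simp [hk, hT, Real.pi_ne_zero]
  have hcT : 2 * π * I * k / T * T = k * (2 * π * I) := by
    field_simp [ofReal_ne_zero.2 hT]
  rw [integral_exp_mul_complex hc, hcT, exp_int_mul_two_pi_mul_I, ofReal_zero, mul_zero, exp_zero,
    sub_self, zero_div]

theorem bfun_mul_conj_bfun {T : ℝ} (hT : 0 < T) (n m : ℤ) (x : ℝ) :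
    bfun T n x * conj (bfun T m x) = (T : ℂ)⁻¹ * cexp (2 * π * I * (n - m : ℤ) / T * x) := by
  have hsqrt : ((1 / √T : ℝ) : ℂ) * ((1 / √T : ℝ) : ℂ) = (T : ℂ)⁻¹ := by
    rw [← ofReal_mul, div_mul_div_comm, one_mul, Real.mul_self_sqrt hT.le, one_div, ofReal_inv]
  simp only [bfun, real_smul, map_mul, ← exp_conj, map_div₀, map_ofNat, conj_ofReal, conj_I,
    map_intCast]
  rw [mul_mul_mul_comm, hsqrt, ← exp_add]
  congr 2
  push_cast
  ring

theorem integral_bfun_mul_conj {T : ℝ} (hT : 0 < T) (n m : ℤ) :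
    ∫ x in Ico 0 T, bfun T n x * conj (bfun T m x) = if n = m then 1 else 0 := by
  simp_rw [bfun_mul_conj_bfun hT, integral_const_mul]
  rw [setIntegral_congr_set Ico_ae_eq_Ioc, ← intervalIntegral.integral_of_le hT.le,
    integral_exp_two_pi_I_int_mul hT.ne']
  simp only [sub_eq_zero]
  split_ifs
  · exact inv_mul_cancel₀ (ofReal_ne_zero.2 hT.ne')
  · exact mul_zero _

theorem cexp_two_pi_I_int_mul_cut (T : ℝ) (n : ℤ) (x : ℝ) :
    cexp (2 * π * I * n * cut T x / T) = cexp (2 * π * I * n * x / T) := by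
  rcases eq_or_ne T 0 with rfl | hT
  · simp [cut]
  rw [cut, ← mul_one (cexp (2 * π * I * n * x / T)), ← exp_int_mul_two_pi_mul_I (-(n * ⌊x / T⌋)),
    ← exp_add]
  congr 1
  push_cast
  field_simp [ofReal_ne_zero.2 hT]
  ring

theorem efun_eq_Aop_bfun (T lm : ℝ) (n : ℤ) (x : ℝ) : efun T lm n x = Aop T lm (bfun T n) x := by
  rw [Aop, bfun, cexp_two_pi_I_int_mul_cut, efun, smul_comm, real_smul, real_smul, real_smul,
    ofReal_exp, ← exp_add]
  congr 2
  push_cast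
  ring

/-- `(e_n)_{n∈ℤ}` is a Riesz basis of `ran 𝒜 ⊆ L²(ℝ₊,ℂ)`:
`e_n = 𝒜 b_n` where `(b_n)` is the orthonormal (Fourier) basis of `L²([0,T),ℂ)`,
and `𝒜` is bounded and bounded below (hence a bounded invertible operator
onto its range). -/
theorem stmt_3 (T lm : ℝ) (hT : 0 < T) (hl : 0 < lm) :
    -- (b_n) is an orthonormal family in L²([0,T),ℂ)
    (∀ n m : ℤ,
      (∫ x in Set.Ico 0 T, bfun T n x * (starRingEnd ℂ) (bfun T m x))
        = if n = m then 1 else 0) ∧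
    -- e_n = 𝒜 b_n
    (∀ (n : ℤ) (x : ℝ), 0 ≤ x → efun T lm n x = Aop T lm (bfun T n) x) ∧
    -- 𝒜 is bounded above and below, hence invertible onto its range
    (∀ f : ℝ → ℂ, IntegrableOn (fun x => ‖f x‖ ^ 2) (Set.Ico 0 T) →
      (Real.exp (-2 * T * lm) / (1 - Real.exp (-2 * T * lm))) *
          (∫ x in Set.Ico 0 T, ‖f x‖ ^ 2)
        ≤ (∫ x in Set.Ici (0:ℝ), ‖Aop T lm f x‖ ^ 2) ∧
      (∫ x in Set.Ici (0:ℝ), ‖Aop T lm f x‖ ^ 2)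
        ≤ (1 / (1 - Real.exp (-2 * T * lm))) * (∫ x in Set.Ico 0 T, ‖f x‖ ^ 2)) := by
  refine ⟨integral_bfun_mul_conj hT, fun n x _ => efun_eq_Aop_bfun T lm n x, fun f hf => ?_⟩
  have ha : -2 * lm ≤ 0 := by linarith
  have hr : 0 < 1 - Real.exp (-2 * T * lm) := sub_pos.2 (Real.exp_lt_one_iff.2 (by nlinarith))
  have hlower := exp_mul_setIntegral_le ha (fun y => sq_nonneg ‖f y‖) hf
  have hupper := setIntegral_exp_mul_le ha (fun y => sq_nonneg ‖f y‖) hf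
  rw [show -2 * lm * T = -2 * T * lm by ring] at hlower
  rw [integral_norm_Aop_sq hT hl hf, div_eq_inv_mul, mul_assoc, one_div]
  exact ⟨by gcongr, by gcongr⟩
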